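/- arXiv:1306.0287 — 6 statements merged into one kernel-verified Lean document; each statement's English description precedes it below -/
import Mathlib

section
/- Let X be a finite-dimensional real vector space and F : X → [0,∞) a function satisfying: (a) F(0) = 0; (b) F(tx) ≤ t²F(x) for every x ∈ X and every t > 0; (c) F(x+y) + F(x−y) ≤ 2F(x) + 2F(y) for every x,y ∈ X. Then F is a quadratic form, i.e. there exists a symmetric bilinear form B on X with F(x) = B(x,x) for all x. -/
/-!
Homogeneity upgrades itself to `F (t • x) = t ^ 2 * F x` (apply it again with `t⁻¹`), and the
parallelogram inequality then becomes an equality (apply it to `x + y` and `x - y`). From the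
parallelogram law alone, the polar form `F (x + y) - F x - F y` is additive in `x`. Nonnegativity
bounds the polar form by `F x + F y`, so `t ↦ polar F (t • x) y` is an additive map `ℝ → ℝ` that is
bounded near `0`, hence continuous, hence linear. `F` is therefore a quadratic form, and its
associated bilinear form is the required `B`.
-/

open QuadraticMap

section ParallelogramLaw

variable {X : Type*} [AddCommGroup X] {F : X → ℝ}

theorem map_neg_of_parallelogram_le (hzero : F 0 = 0)
    (hpar : ∀ x y : X, F (x + y) + F (x - y) ≤ 2 * F x + 2 * F y) (x : X) : F (-x) = F x := by
  have h₁ := hpar 0 x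
  have h₂ := hpar 0 (-x)
  simp only [zero_add, zero_sub, neg_neg, hzero] at h₁ h₂
  linarith

theorem polar_add_left_of_parallelogram
    (hpar : ∀ x y : X, F (x + y) + F (x - y) = 2 * F x + 2 * F y) (x x' y : X) :
    polar F (x + x') y = polar F x y + polar F x' y := by
  have h₁ := hpar (x + y) x'
  have h₂ := hpar (x' + y) x
  have h₃ := hpar y (x - x')
  have h₄ := hpar x x'
  rw [show x + y + x' = x + x' + y by abel, show x' + y + x = x + x' + y by abel,
    show x' + y - x = y - (x - x') by abel, show x + y - x' = y + (x - x') by abel] at *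
  simp only [polar]
  linarith

theorem abs_polar_le_of_parallelogram_le (hnonneg : ∀ x, 0 ≤ F x)
    (hpar : ∀ x y : X, F (x + y) + F (x - y) ≤ 2 * F x + 2 * F y) (x y : X) :
    |polar F x y| ≤ F x + F y := by
  have := hpar x y
  have := hnonneg (x + y)
  have := hnonneg (x - y)
  rw [abs_le, polar]
  constructor <;> linarith

variable [Module ℝ X]

theorem smul_eq_sq_mul_of_pos (hhom : ∀ x : X, ∀ t : ℝ, 0 < t → F (t • x) ≤ t ^ 2 * F x)
    {t : ℝ} (ht : 0 < t) (x : X) : F (t • x) = t ^ 2 * F x := by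
  refine le_antisymm (hhom x t ht) ?_
  have h := hhom (t • x) t⁻¹ (inv_pos.mpr ht)
  rw [smul_smul, inv_mul_cancel₀ ht.ne', one_smul] at h
  calc t ^ 2 * F x ≤ t ^ 2 * (t⁻¹ ^ 2 * F (t • x)) := by gcongr
    _ = F (t • x) := by field_simp

theorem map_zero_of_smul_eq_sq_mul (hsq : ∀ x : X, F ((2 : ℝ) • x) = 2 ^ 2 * F x) : F 0 = 0 := by
  have h := hsq 0
  rw [smul_zero] at h
  linarith

theorem smul_eq_sq_mul (hhom : ∀ x : X, ∀ t : ℝ, 0 < t → F (t • x) ≤ t ^ 2 * F x)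
    (hpar : ∀ x y : X, F (x + y) + F (x - y) ≤ 2 * F x + 2 * F y) (x : X) (t : ℝ) :
    F (t • x) = t ^ 2 * F x := by
  have hzero := map_zero_of_smul_eq_sq_mul (smul_eq_sq_mul_of_pos hhom two_pos)
  rcases lt_trichotomy t 0 with ht | rfl | ht
  · rw [← neg_neg t, neg_smul, map_neg_of_parallelogram_le hzero hpar,
      smul_eq_sq_mul_of_pos hhom (neg_pos.2 ht), neg_sq, neg_neg]
  · simp [hzero]
  · exact smul_eq_sq_mul_of_pos hhom ht x

theorem parallelogram_eq_of_le (hsq : ∀ x : X, F ((2 : ℝ) • x) = 2 ^ 2 * F x)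
    (hpar : ∀ x y : X, F (x + y) + F (x - y) ≤ 2 * F x + 2 * F y) (x y : X) :
    F (x + y) + F (x - y) = 2 * F x + 2 * F y := by
  refine le_antisymm (hpar x y) ?_
  have h := hpar (x + y) (x - y)
  rw [show x + y + (x - y) = (2 : ℝ) • x by module, show x + y - (x - y) = (2 : ℝ) • y by module,
    hsq, hsq] at h
  linarith

theorem polar_smul_left_of_parallelogram (hnonneg : ∀ x, 0 ≤ F x)
    (hsq : ∀ x : X, ∀ t : ℝ, F (t • x) = t ^ 2 * F x)
    (hpar : ∀ x y : X, F (x + y) + F (x - y) = 2 * F x + 2 * F y) (t : ℝ) (x y : X) :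
    polar F (t • x) y = t * polar F x y := by
  let g : ℝ →+ ℝ := AddMonoidHom.mk' (fun s ↦ polar F (s • x) y) fun a b ↦ by
    simp only [add_smul, polar_add_left_of_parallelogram hpar]
  have hbound : ∀ s ∈ Metric.ball (0 : ℝ) 1, |g s| ≤ F x + F y := fun s hs ↦ by
    have hs : s ^ 2 ≤ 1 := by
      rw [Metric.mem_ball, dist_zero_right, Real.norm_eq_abs] at hs
      nlinarith [abs_nonneg s, sq_abs s]
    calc |g s| ≤ F (s • x) + F y :=
          abs_polar_le_of_parallelogram_le hnonneg (fun a b ↦ (hpar a b).le) _ _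
      _ ≤ F x + F y := by rw [hsq]; nlinarith [hnonneg x]
  have hcont : Continuous g := g.continuous_of_isBounded_nhds_zero (Metric.ball_mem_nhds 0 one_pos)
    ((Metric.isBounded_iff_subset_closedBall 0).2 ⟨F x + F y, by
      rintro _ ⟨s, hs, rfl⟩
      simpa [Real.norm_eq_abs] using hbound s hs⟩)
  simpa [g] using map_real_smul g hcont t 1

end ParallelogramLaw

theorem stmt1_general (X : Type*) [AddCommGroup X] [Module ℝ X]
    (F : X → ℝ)
    (hnonneg : ∀ x, 0 ≤ F x)
    (hhom : ∀ x : X, ∀ t : ℝ, 0 < t → F (t • x) ≤ t ^ 2 * F x)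
    (hpar : ∀ x y : X, F (x + y) + F (x - y) ≤ 2 * F x + 2 * F y) :
    ∃ B : X →ₗ[ℝ] X →ₗ[ℝ] ℝ, (∀ x y, B x y = B y x) ∧ ∀ x, F x = B x x := by
  have hsq := smul_eq_sq_mul hhom hpar
  have hpar' := parallelogram_eq_of_le (fun x ↦ hsq x 2) hpar
  let Q : QuadraticForm ℝ X := QuadraticMap.ofPolar F
    (fun t x ↦ by rw [hsq, smul_eq_mul, _root_.sq])
    (polar_add_left_of_parallelogram hpar')
    (fun t x y ↦ polar_smul_left_of_parallelogram hnonneg hsq hpar' t x y)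
  exact ⟨associated Q, associated_isSymm ℝ Q, fun x ↦ (associated_eq_self_apply ℝ Q x).symm⟩

/-- a nonnegative function on a finite-dimensional real vector space
with `F 0 = 0`, `F (t•x) ≤ t² F x` for `t > 0`, and the parallelogram inequality,
is a quadratic form. -/
theorem stmt1 (X : Type*) [AddCommGroup X] [Module ℝ X] [FiniteDimensional ℝ X]
    (F : X → ℝ)
    (hnonneg : ∀ x, 0 ≤ F x)
    (hzero : F 0 = 0)
    (hhom : ∀ x : X, ∀ t : ℝ, 0 < t → F (t • x) ≤ t ^ 2 * F x)
    (hpar : ∀ x y : X, F (x + y) + F (x - y) ≤ 2 * F x + 2 * F y) :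
    ∃ B : X →ₗ[ℝ] X →ₗ[ℝ] ℝ, (∀ x y, B x y = B y x) ∧ ∀ x, F x = B x x :=
  stmt1_general X F hnonneg hhom hpar
end

section
/- There exist δ > 0 and a monotone increasing function η : (0,δ) → (0,∞) with η(r) → 0 as r → 0, such that for every 3×3 real matrix A with |A| < δ, one has |√((I+A)ᵀ(I+A)) − (I + sym A + ½AᵀA)| ≤ η(|A|)·|sym A + ½AᵀA|. -/
open Matrix
open scoped MatrixOrder

noncomputable def frob {m : Type*} [Fintype m] (A : Matrix m m ℝ) : ℝ :=
  Real.sqrt (∑ i, ∑ j, (A i j) ^ 2)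

noncomputable def symPart {m : Type*} [Fintype m] (A : Matrix m m ℝ) : Matrix m m ℝ :=
  (1 / 2 : ℝ) • (A + Aᵀ)

/-!
Write `M = (I + A)ᵀ(I + A) = I + 2E` with `E = sym A + ½AᵀA`, and `C = √M - I`. Since `(I + C)² = M`,
`√M - (I + E) = -½C²`, so the error is at most `½|C|²`. Diagonalising `M`, the matrices `C` and
`M - I` have eigenvalues `√μ - 1` and `μ - 1` with `μ ≥ 0`, and `|√μ - 1| ≤ |μ - 1|`; as the Frobenius
norm is unitarily invariant, `|C| ≤ |M - I| = 2|E|`. Hence the error is at most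
`2|E|² ≤ (2|A| + |A|²)|E|`, using `|E| ≤ |A| + ½|A|²`: `η(r) = 2r + r²` works for every `δ`.
-/

attribute [local instance] Matrix.frobeniusSeminormedAddCommGroup Matrix.frobeniusNormedSpace

theorem abs_sqrt_sub_one_le {x : ℝ} (hx : 0 ≤ x) : |√x - 1| ≤ |x - 1| := by
  have hpos : 0 ≤ √x + 1 := by positivity
  calc |√x - 1| ≤ |√x - 1| * (√x + 1) :=
        le_mul_of_one_le_right (abs_nonneg _) (by linarith [Real.sqrt_nonneg x])
    _ = |x - 1| := by
        rw [← abs_of_nonneg hpos, ← abs_mul]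
        congr 1
        linear_combination Real.sq_sqrt hx

namespace Matrix

variable {m n 𝕜 : Type*} [Fintype m] [Fintype n] [RCLike 𝕜]

theorem frobenius_norm_sq_eq_re_trace (X : Matrix m n 𝕜) :
    ‖X‖ ^ 2 = RCLike.re (Xᴴ * X).trace := by
  rw [frobenius_norm_def, ← Real.sqrt_eq_rpow, Real.sq_sqrt (by positivity)]
  simp only [trace, diag, mul_apply, conjTranspose_apply, map_sum]
  rw [Finset.sum_comm]
  simp only [Real.rpow_ofNat, RCLike.star_def, RCLike.conj_mul, RCLike.re_ofReal_pow]

variable [DecidableEq n]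

theorem frobenius_norm_conjStarAlgAut (U : unitary (Matrix n n 𝕜)) (X : Matrix n n 𝕜) :
    ‖Unitary.conjStarAlgAut 𝕜 _ U X‖ = ‖X‖ := by
  rw [← sq_eq_sq₀ (norm_nonneg _) (norm_nonneg _), frobenius_norm_sq_eq_re_trace,
    frobenius_norm_sq_eq_re_trace, Unitary.conjStarAlgAut_apply, ← star_eq_conjTranspose,
    star_mul, star_mul, star_star]
  simp only [mul_assoc, ← mul_assoc (star (U : Matrix n n 𝕜)) U, Unitary.coe_star_mul_self, one_mul]
  rw [trace_mul_comm, mul_assoc, mul_assoc, Unitary.coe_star_mul_self, mul_one]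
  rfl

theorem frobenius_norm_diagonal_sq (v : n → 𝕜) : ‖diagonal v‖ ^ 2 = ∑ i, ‖v i‖ ^ 2 := by
  rw [frobenius_norm_diagonal, EuclideanSpace.norm_sq_eq]

theorem IsHermitian.frobenius_norm_cfc_sq {A : Matrix n n 𝕜} (hA : A.IsHermitian) (f : ℝ → ℝ) :
    ‖cfc f A‖ ^ 2 = ∑ i, f (hA.eigenvalues i) ^ 2 := by
  rw [hA.cfc_eq, IsHermitian.cfc, frobenius_norm_conjStarAlgAut, frobenius_norm_diagonal_sq]
  simp

theorem IsHermitian.frobenius_norm_cfc_le {A : Matrix n n 𝕜} (hA : A.IsHermitian) {f g : ℝ → ℝ}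
    (h : ∀ x ∈ spectrum ℝ A, |f x| ≤ |g x|) : ‖cfc f A‖ ≤ ‖cfc g A‖ := by
  rw [← pow_le_pow_iff_left₀ (norm_nonneg _) (norm_nonneg _) two_ne_zero,
    hA.frobenius_norm_cfc_sq, hA.frobenius_norm_cfc_sq]
  exact Finset.sum_le_sum fun i _ ↦ sq_le_sq.mpr (h _ (hA.eigenvalues_mem_spectrum_real i))

theorem norm_sqrt_sub_one_le {M : Matrix n n 𝕜} (hM : 0 ≤ M) : ‖CFC.sqrt M - 1‖ ≤ ‖M - 1‖ := by
  have hS : CFC.sqrt M - 1 = cfc (fun x ↦ √x - 1) M := by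
    rw [cfc_sub .., cfc_const_one .., CFC.sqrt_eq_real_sqrt M hM, cfcₙ_eq_cfc]
  have hM1 : M - 1 = cfc (fun x : ℝ ↦ x - 1) M := by
    rw [cfc_sub .., cfc_id' .., cfc_const_one ..]
  rw [hS, hM1]
  exact hM.isSelfAdjoint.isHermitian.frobenius_norm_cfc_le fun x hx ↦
    abs_sqrt_sub_one_le (spectrum_nonneg_of_nonneg hM hx)

theorem norm_sqrt_sub_taylor_le {M : Matrix n n 𝕜} (hM : 0 ≤ M) :
    ‖CFC.sqrt M - (1 + (1 / 2 : ℝ) • (M - 1))‖ ≤ ‖M - 1‖ ^ 2 / 2 := by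
  set C := CFC.sqrt M - 1
  have hC : CFC.sqrt M - (1 + (1 / 2 : ℝ) • (M - 1)) = -((1 / 2 : ℝ) • (C * C)) := by
    simp only [C, sub_mul, mul_sub, mul_one, one_mul, CFC.sqrt_mul_sqrt_self M hM]
    module
  calc ‖CFC.sqrt M - (1 + (1 / 2 : ℝ) • (M - 1))‖ = ‖C * C‖ / 2 := by
        rw [hC, norm_neg, norm_smul, Real.norm_of_nonneg (by norm_num)]
        ring
    _ ≤ ‖C‖ ^ 2 / 2 := by
        rw [sq]
        gcongr
        exact frobenius_norm_mul C C
    _ ≤ ‖M - 1‖ ^ 2 / 2 := by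
        gcongr
        exact norm_sqrt_sub_one_le hM

end Matrix

section Gram

variable {n : Type*} [Fintype n]

theorem frob_eq_norm (A : Matrix n n ℝ) : frob A = ‖A‖ := by
  rw [frob, frobenius_norm_def, Real.sqrt_eq_rpow]
  simp only [Real.norm_eq_abs, Real.rpow_two, sq_abs]

theorem norm_symPart_add_half_transpose_mul_self_le (A : Matrix n n ℝ) :
    ‖symPart A + (1 / 2 : ℝ) • (Aᵀ * A)‖ ≤ ‖A‖ + ‖A‖ ^ 2 / 2 := by
  have hsym : ‖symPart A‖ ≤ ‖A‖ := by
    calc ‖symPart A‖ = ‖A + Aᵀ‖ / 2 := by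
          rw [symPart, norm_smul, Real.norm_of_nonneg (by norm_num)]
          ring
      _ ≤ (‖A‖ + ‖Aᵀ‖) / 2 := by gcongr; exact norm_add_le A Aᵀ
      _ = ‖A‖ := by rw [frobenius_norm_transpose]; ring
  have hquad : ‖(1 / 2 : ℝ) • (Aᵀ * A)‖ ≤ ‖A‖ ^ 2 / 2 := by
    calc ‖(1 / 2 : ℝ) • (Aᵀ * A)‖ = ‖Aᵀ * A‖ / 2 := by
          rw [norm_smul, Real.norm_of_nonneg (by norm_num)]
          ring
      _ ≤ ‖Aᵀ‖ * ‖A‖ / 2 := by gcongr; exact frobenius_norm_mul Aᵀ A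
      _ = ‖A‖ ^ 2 / 2 := by rw [frobenius_norm_transpose]; ring
  linarith [norm_add_le (symPart A) ((1 / 2 : ℝ) • (Aᵀ * A))]

variable [DecidableEq n]

theorem conjTranspose_one_add_mul_self_sub_one (A : Matrix n n ℝ) :
    (1 + A)ᴴ * (1 + A) - 1 = (2 : ℝ) • (symPart A + (1 / 2 : ℝ) • (Aᵀ * A)) := by
  rw [conjTranspose_add, conjTranspose_one, conjTranspose_eq_transpose_of_trivial, symPart]
  simp only [add_mul, mul_add, one_mul, mul_one]
  module

theorem norm_sqrt_gram_sub_le (A : Matrix n n ℝ) :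
    ‖CFC.sqrt ((1 + A)ᴴ * (1 + A)) - (1 + symPart A + (1 / 2 : ℝ) • (Aᵀ * A))‖
      ≤ (2 * ‖A‖ + ‖A‖ ^ 2) * ‖symPart A + (1 / 2 : ℝ) • (Aᵀ * A)‖ := by
  have h := norm_sqrt_sub_taylor_le (posSemidef_conjTranspose_mul_self (1 + A)).nonneg
  rw [conjTranspose_one_add_mul_self_sub_one, smul_smul, (by norm_num : (1 / 2 : ℝ) * 2 = 1),
    one_smul, norm_smul, Real.norm_ofNat, ← add_assoc] at h
  calc _ ≤ 2 * ‖symPart A + (1 / 2 : ℝ) • (Aᵀ * A)‖ * ‖symPart A + (1 / 2 : ℝ) • (Aᵀ * A)‖ :=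
        h.trans_eq (by ring)
    _ ≤ _ := by
        gcongr
        linarith [norm_symPart_add_half_transpose_mul_self_le A]

end Gram

/-- Taylor expansion of the matrix square root at the identity: there exist
`δ > 0` and a monotone increasing `η : (0,δ) → (0,∞)` with `η(r) → 0` as `r → 0⁺`, such
that for all 3×3 matrices `A` with `|A| < δ`,
`|√((I+A)ᵀ(I+A)) − (I + sym A + ½AᵀA)| ≤ η(|A|)·|sym A + ½AᵀA|`. -/
theorem stmt3 :
    ∃ δ : ℝ, 0 < δ ∧ ∃ η : ℝ → ℝ,
      MonotoneOn η (Set.Ioo 0 δ) ∧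
      (∀ r ∈ Set.Ioo 0 δ, 0 < η r) ∧
      Filter.Tendsto η (nhdsWithin 0 (Set.Ioi 0)) (nhds 0) ∧
      ∀ A : Matrix (Fin 3) (Fin 3) ℝ, frob A < δ →
        frob (CFC.sqrt ((1 + A)ᴴ * (1 + A))
            - (1 + symPart A + (1 / 2 : ℝ) • (Aᵀ * A)))
          ≤ η (frob A) * frob (symPart A + (1 / 2 : ℝ) • (Aᵀ * A)) := by
  refine ⟨1, one_pos, fun r ↦ 2 * r + r ^ 2, ?_, ?_, ?_, fun A _ ↦ ?_⟩
  · intro r hr s _ hrs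
    have := hr.1.le
    dsimp only
    gcongr
  · intro r hr
    dsimp only
    nlinarith [hr.1]
  · exact ((by fun_prop : Continuous fun r : ℝ ↦ 2 * r + r ^ 2).tendsto' 0 0 (by norm_num)).mono_left
      nhdsWithin_le_nhds
  · simpa only [frob_eq_norm] using norm_sqrt_gram_sub_le A
end

section
/- For every 3×3 real matrix F, |√(FᵀF) − I| ≤ dist(F, SO(3)), where dist(F, SO(3)) = inf over R ∈ SO(3) of |F − R|. Moreover, if det F > 0, then equality holds. -/
open Matrix

/-- The positive semidefinite square root of a positive semidefinite matrix
(the definition `Matrix.PosSemidef.sqrt` of the older Mathlib, since removed). -/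
noncomputable def Matrix.PosSemidef.sqrt {n : Type*} [Fintype n] [DecidableEq n]
    {A : Matrix n n ℝ} (hA : A.PosSemidef) : Matrix n n ℝ :=
  hA.1.eigenvectorUnitary.1 * diagonal ((↑) ∘ (√·) ∘ hA.1.eigenvalues) *
    (star hA.1.eigenvectorUnitary : Matrix n n ℝ)

/-- The set of 3×3 rotation matrices. -/
def SO3 : Set (Matrix (Fin 3) (Fin 3) ℝ) :=
  {R | Rᵀ * R = 1 ∧ R.det = 1}

/-- Distance (in Frobenius norm) from a matrix to `SO(3)`. -/
noncomputable def distSO3 (F : Matrix (Fin 3) (Fin 3) ℝ) : ℝ :=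
  sInf {d | ∃ R ∈ SO3, d = frob (F - R)}

/-!
Write `U = √(FᵀF)`. Since `Uᵀ = U` and `U² = FᵀF`, expanding Frobenius norms gives
`|F - R|² - |U - 1|² = 2 (tr U - tr (Rᵀ F))` for every orthogonal `R`. Diagonalising `FᵀF` by an
orthogonal `V`, the columns of `R V` are unit vectors and those of `F V` have lengths `√μᵢ`, so
Cauchy–Schwarz column by column gives `tr (Rᵀ F) ≤ ∑ √μᵢ = tr U`. If `det F > 0`, then
`det U = det F`, so `Q = F U⁻¹` is a rotation and `|F - Q| = |Q (U - 1)| = |U - 1|`.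
-/

namespace Matrix

variable {m n : Type*} [Fintype m] [Fintype n]

theorem trace_transpose_mul_le (A B : Matrix m n ℝ) :
    trace (Aᵀ * B) ≤ ∑ j, √((Aᵀ * A) j j) * √((Bᵀ * B) j j) := by
  refine Finset.sum_le_sum fun j _ => ?_
  simpa only [diag_apply, mul_apply, transpose_apply, pow_two] using
    Real.sum_mul_le_sqrt_mul_sqrt Finset.univ (fun k => A k j) (fun k => B k j)

theorem trace_transpose_sub_mul_sub (A B : Matrix m n ℝ) :
    trace ((A - B)ᵀ * (A - B)) = trace (Aᵀ * A) - 2 * trace (Bᵀ * A) + trace (Bᵀ * B) := by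
  have hswap : trace (Aᵀ * B) = trace (Bᵀ * A) := by
    rw [← trace_transpose, transpose_mul, transpose_transpose]
  rw [transpose_sub, Matrix.sub_mul, Matrix.mul_sub, Matrix.mul_sub, trace_sub, trace_sub,
    trace_sub, hswap]
  ring

variable [DecidableEq n]

namespace IsHermitian

variable {A : Matrix n n ℝ} (hA : A.IsHermitian)

theorem eigenvectorUnitary_transpose_mul_self :
    (hA.eigenvectorUnitary : Matrix n n ℝ)ᵀ * hA.eigenvectorUnitary = 1 := by
  rw [← conjTranspose_eq_transpose_of_trivial, ← star_eq_conjTranspose]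
  exact Unitary.coe_star_mul_self _

theorem eigenvectorUnitary_mul_transpose_self :
    (hA.eigenvectorUnitary : Matrix n n ℝ) * (hA.eigenvectorUnitary : Matrix n n ℝ)ᵀ = 1 := by
  rw [← conjTranspose_eq_transpose_of_trivial, ← star_eq_conjTranspose]
  exact Unitary.coe_mul_star_self _

theorem eigenvectorUnitary_transpose_mul_mul :
    (hA.eigenvectorUnitary : Matrix n n ℝ)ᵀ * A * hA.eigenvectorUnitary =
      diagonal hA.eigenvalues := by
  have := hA.conjStarAlgAut_star_eigenvectorUnitary
  rw [Unitary.conjStarAlgAut_star_apply, star_eq_conjTranspose,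
    conjTranspose_eq_transpose_of_trivial] at this
  simpa using this

end IsHermitian

namespace PosSemidef

variable {A : Matrix n n ℝ} (hA : A.PosSemidef)

theorem sqrt_eq : hA.sqrt = (hA.1.eigenvectorUnitary : Matrix n n ℝ) *
    diagonal (fun i => √(hA.1.eigenvalues i)) * (hA.1.eigenvectorUnitary : Matrix n n ℝ)ᵀ := by
  rw [sqrt, star_eq_conjTranspose, conjTranspose_eq_transpose_of_trivial]
  rfl

theorem posSemidef_sqrt : hA.sqrt.PosSemidef := by
  have hD : (diagonal fun i => √(hA.1.eigenvalues i)).PosSemidef :=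
    posSemidef_diagonal_iff.mpr fun i => Real.sqrt_nonneg _
  simpa [sqrt_eq, conjTranspose_eq_transpose_of_trivial] using
    hD.mul_mul_conjTranspose_same (hA.1.eigenvectorUnitary : Matrix n n ℝ)

theorem transpose_sqrt : hA.sqrtᵀ = hA.sqrt := by
  rw [← conjTranspose_eq_transpose_of_trivial]
  exact hA.posSemidef_sqrt.1

theorem sqrt_mul_self : hA.sqrt * hA.sqrt = A := by
  set V : Matrix n n ℝ := (hA.1.eigenvectorUnitary : Matrix n n ℝ)
  set D : Matrix n n ℝ := diagonal fun i => √(hA.1.eigenvalues i)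
  have hDD : D * D = diagonal hA.1.eigenvalues := by
    rw [diagonal_mul_diagonal]
    simp only [Real.mul_self_sqrt (hA.eigenvalues_nonneg _)]
  calc hA.sqrt * hA.sqrt = V * (D * (Vᵀ * V) * D) * Vᵀ := by
        simp only [sqrt_eq, V, D, Matrix.mul_assoc]
    _ = V * (Vᵀ * A * V) * Vᵀ := by
        rw [hA.1.eigenvectorUnitary_transpose_mul_self, Matrix.mul_one, hDD,
          hA.1.eigenvectorUnitary_transpose_mul_mul]
    _ = (V * Vᵀ) * A * (V * Vᵀ) := by simp only [Matrix.mul_assoc]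
    _ = A := by
        rw [hA.1.eigenvectorUnitary_mul_transpose_self, Matrix.one_mul, Matrix.mul_one]

theorem trace_sqrt : trace hA.sqrt = ∑ i, √(hA.1.eigenvalues i) := by
  rw [sqrt_eq, trace_mul_cycle, hA.1.eigenvectorUnitary_transpose_mul_self, Matrix.one_mul,
    trace_diagonal]

end PosSemidef

theorem sqrt_conjTranspose_mul_self_mul_self (F : Matrix n n ℝ) :
    (posSemidef_conjTranspose_mul_self F).sqrt * (posSemidef_conjTranspose_mul_self F).sqrt =
      Fᵀ * F :=
  (posSemidef_conjTranspose_mul_self F).sqrt_mul_self.trans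
    (by rw [conjTranspose_eq_transpose_of_trivial])

theorem trace_transpose_mul_le_trace_sqrt {F R : Matrix n n ℝ} (hR : Rᵀ * R = 1) :
    trace (Rᵀ * F) ≤ trace (posSemidef_conjTranspose_mul_self F).sqrt := by
  set hA := posSemidef_conjTranspose_mul_self F
  set V : Matrix n n ℝ := (hA.1.eigenvectorUnitary : Matrix n n ℝ)
  have hRV : (R * V)ᵀ * (R * V) = 1 := by
    rw [transpose_mul, Matrix.mul_assoc, ← Matrix.mul_assoc Rᵀ, hR, Matrix.one_mul,
      hA.1.eigenvectorUnitary_transpose_mul_self]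
  have hFV : (F * V)ᵀ * (F * V) = diagonal hA.1.eigenvalues := by
    rw [← hA.1.eigenvectorUnitary_transpose_mul_mul]
    change _ = Vᵀ * (Fᴴ * F) * V
    rw [conjTranspose_eq_transpose_of_trivial]
    simp only [transpose_mul, Matrix.mul_assoc]
  calc trace (Rᵀ * F) = trace (Rᵀ * F * (V * Vᵀ)) := by
        rw [hA.1.eigenvectorUnitary_mul_transpose_self, Matrix.mul_one]
    _ = trace ((R * V)ᵀ * (F * V)) := by
        rw [transpose_mul, Matrix.mul_assoc Vᵀ, trace_mul_comm Vᵀ]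
        simp only [Matrix.mul_assoc]
    _ ≤ ∑ i, √(((R * V)ᵀ * (R * V)) i i) * √(((F * V)ᵀ * (F * V)) i i) :=
        trace_transpose_mul_le _ _
    _ = trace hA.sqrt := by
        rw [hRV, hFV, hA.trace_sqrt]
        simp

end Matrix

section Frobenius

variable {n : Type*} [Fintype n]

theorem frob_eq_sqrt_trace (A : Matrix n n ℝ) : frob A = √(trace (Aᵀ * A)) := by
  rw [frob, Finset.sum_comm]
  simp [trace, mul_apply, pow_two]

variable [DecidableEq n]

theorem frob_orthogonal_mul {Q : Matrix n n ℝ} (hQ : Qᵀ * Q = 1) (A : Matrix n n ℝ) :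
    frob (Q * A) = frob A := by
  rw [frob_eq_sqrt_trace, frob_eq_sqrt_trace, transpose_mul, Matrix.mul_assoc,
    ← Matrix.mul_assoc Qᵀ, hQ, Matrix.one_mul]

theorem frob_sqrt_sub_one_le {F R : Matrix n n ℝ} (hR : Rᵀ * R = 1) :
    frob ((posSemidef_conjTranspose_mul_self F).sqrt - 1) ≤ frob (F - R) := by
  rw [frob_eq_sqrt_trace, frob_eq_sqrt_trace]
  refine Real.sqrt_le_sqrt ?_
  rw [trace_transpose_sub_mul_sub, trace_transpose_sub_mul_sub,
    (posSemidef_conjTranspose_mul_self F).transpose_sqrt, sqrt_conjTranspose_mul_self_mul_self,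
    hR, transpose_one, Matrix.one_mul, Matrix.one_mul]
  linarith [trace_transpose_mul_le_trace_sqrt (F := F) hR]

theorem exists_orthogonal_mul_sqrt_eq {F : Matrix n n ℝ} (hF : 0 < F.det) :
    ∃ Q : Matrix n n ℝ, Qᵀ * Q = 1 ∧ Q.det = 1 ∧
      Q * (posSemidef_conjTranspose_mul_self F).sqrt = F := by
  set hA := posSemidef_conjTranspose_mul_self F
  set U := hA.sqrt
  have hUU : U * U = Fᵀ * F := sqrt_conjTranspose_mul_self_mul_self F
  have hdetU : U.det = F.det := by
    refine (pow_left_inj₀ hA.posSemidef_sqrt.det_nonneg hF.le two_ne_zero).mp ?_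
    simpa [sq, det_mul, det_transpose] using congrArg det hUU
  have hU : IsUnit U.det := hdetU ▸ hF.ne'.isUnit
  refine ⟨F * U⁻¹, ?_, ?_, nonsing_inv_mul_cancel_right U F hU⟩
  · rw [transpose_mul, transpose_nonsing_inv, hA.transpose_sqrt, Matrix.mul_assoc,
      ← Matrix.mul_assoc Fᵀ, ← hUU, Matrix.mul_assoc U, mul_nonsing_inv U hU, Matrix.mul_one,
      nonsing_inv_mul U hU]
  · rw [det_mul, det_nonsing_inv, Ring.inverse_eq_inv', hdetU, mul_inv_cancel₀ hF.ne']

end Frobenius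

/-- `|√(FᵀF) − I| ≤ dist(F, SO(3))` for every 3×3 real matrix `F`, with
equality when `det F > 0`. -/
theorem stmt4 (F : Matrix (Fin 3) (Fin 3) ℝ) :
    frob ((Matrix.posSemidef_conjTranspose_mul_self F).sqrt - 1) ≤ distSO3 F ∧
      (0 < F.det → frob ((Matrix.posSemidef_conjTranspose_mul_self F).sqrt - 1) = distSO3 F) := by
  have hlb : ∀ d ∈ {d | ∃ R ∈ SO3, d = frob (F - R)},
      frob ((posSemidef_conjTranspose_mul_self F).sqrt - 1) ≤ d := by
    rintro d ⟨R, hR, rfl⟩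
    exact frob_sqrt_sub_one_le hR.1
  have hle : frob ((posSemidef_conjTranspose_mul_self F).sqrt - 1) ≤ distSO3 F :=
    le_csInf ⟨_, 1, ⟨by simp, det_one⟩, rfl⟩ hlb
  refine ⟨hle, fun hdet => le_antisymm hle (csInf_le ⟨_, hlb⟩ ?_)⟩
  obtain ⟨Q, hQ, hQdet, hQU⟩ := exists_orthogonal_mul_sqrt_eq hdet
  refine ⟨Q, ⟨hQ, hQdet⟩, ?_⟩
  rw [← frob_orthogonal_mul hQ, Matrix.mul_sub, Matrix.mul_one, hQU]
end

section
/- Let A ⊂ ℝⁿ be an open, bounded set with Lipschitz boundary. Then A has only finitely many connected components. -/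
/-!
Every frontier point of `A` has a neighbourhood `U` with `A ∩ U` connected (in a chart it is an
open half ball), so all of `A ∩ U` lies in a single component of `A`. On the other hand each
component `C` of `A` is a nonempty open set other than the whole space, so it has a frontier
point, and that point lies on `frontier A`; hence `C` meets, and is, the component through one of
the finitely many sets `A ∩ U` covering the compact set `frontier A`.
-/

open Metric

/-- A bounded open set `A ⊂ ℝⁿ` has Lipschitz boundary: every boundary point has a ball
around it which is mapped by a bi-Lipschitz homeomorphism onto the unit ball, sending
`∂A` to the hyperplane slice `{yₙ = 0}` and `A` to `{yₙ > 0}`. -/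
def HasLipschitzBoundary {n : ℕ} (A : Set (EuclideanSpace ℝ (Fin (n + 1)))) : Prop :=
  ∀ x ∈ frontier A, ∃ ε : ℝ, 0 < ε ∧
    ∃ f g : EuclideanSpace ℝ (Fin (n + 1)) → EuclideanSpace ℝ (Fin (n + 1)),
      ∃ K K' : NNReal,
        LipschitzOnWith K f (ball x ε) ∧
        LipschitzOnWith K' g (ball 0 1) ∧
        (∀ y ∈ ball x ε, g (f y) = y) ∧
        (∀ y ∈ ball (0 : EuclideanSpace ℝ (Fin (n + 1))) 1, f (g y) = y) ∧
        f '' ball x ε = ball 0 1 ∧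
        f '' (frontier A ∩ ball x ε) = ball 0 1 ∩ {y | y (Fin.last n) = 0} ∧
        f '' (A ∩ ball x ε) = ball 0 1 ∩ {y | 0 < y (Fin.last n)}

open Set

section Components

variable {X : Type*} [TopologicalSpace X] {A : Set X}

theorem IsPreconnected.subsingleton_image_connectedComponentIn {s : Set X}
    (hs : IsPreconnected s) (hsA : s ⊆ A) : (_root_.connectedComponentIn A '' s).Subsingleton := by
  rintro _ ⟨y, hy, rfl⟩ _ ⟨z, hz, rfl⟩
  exact connectedComponentIn_eq (hs.subset_connectedComponentIn hy hsA hz)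

theorem IsOpen.frontier_connectedComponentIn_subset [LocallyConnectedSpace X] (hA : IsOpen A)
    (x : X) : frontier (connectedComponentIn A x) ⊆ frontier A := by
  intro w hw
  have hCopen := hA.connectedComponentIn (x := x)
  refine ⟨closure_mono (connectedComponentIn_subset A x) hw.1, fun hwA => ?_⟩
  rw [hA.interior_eq] at hwA
  obtain ⟨v, hvw, hvx⟩ := mem_closure_iff.mp hw.1 _ hA.connectedComponentIn
    (mem_connectedComponentIn hwA)
  have hwx : w ∈ connectedComponentIn A x := by
    rw [connectedComponentIn_eq hvx, ← connectedComponentIn_eq hvw]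
    exact mem_connectedComponentIn hwA
  exact (hCopen.frontier_eq ▸ hw).2 hwx

theorem IsOpen.finite_image_connectedComponentIn [LocallyConnectedSpace X] [PreconnectedSpace X]
    (hA : IsOpen A) (hA_ne : A ≠ univ) (hK : IsCompact (frontier A))
    (hloc : ∀ x ∈ frontier A, ∃ U, IsOpen U ∧ x ∈ U ∧ IsPreconnected (A ∩ U)) :
    (connectedComponentIn A '' A).Finite := by
  choose U hU_open hxU hU using hloc
  obtain ⟨t, hcover⟩ := hK.elim_nhds_subcover' U fun x hx => (hU_open x hx).mem_nhds (hxU x hx)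
  refine (t.finite_toSet.biUnion fun x _ =>
    ((hU x x.2 : IsPreconnected _).subsingleton_image_connectedComponentIn
      inter_subset_left).finite).subset ?_
  rintro _ ⟨y, hy, rfl⟩
  obtain ⟨w, hw⟩ : (frontier (connectedComponentIn A y)).Nonempty :=
    nonempty_frontier_iff.mpr ⟨⟨y, mem_connectedComponentIn hy⟩,
      fun h => hA_ne (eq_univ_of_univ_subset (h ▸ connectedComponentIn_subset A y))⟩
  obtain ⟨x, hxt, hwx⟩ := mem_iUnion₂.mp (hcover (hA.frontier_connectedComponentIn_subset y hw))
  obtain ⟨v, hvU, hvy⟩ := mem_closure_iff.mp hw.1 _ (hU_open x x.2) hwx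
  exact mem_iUnion₂.mpr ⟨x, hxt, v, ⟨connectedComponentIn_subset A y hvy, hvU⟩,
    (connectedComponentIn_eq hvy).symm⟩

end Components

theorem HasLipschitzBoundary.exists_isPreconnected_inter_ball {n : ℕ}
    {A : Set (EuclideanSpace ℝ (Fin (n + 1)))} (hLip : HasLipschitzBoundary A)
    {x : EuclideanSpace ℝ (Fin (n + 1))} (hx : x ∈ frontier A) :
    ∃ ε > 0, IsPreconnected (A ∩ ball x ε) := by
  obtain ⟨ε, hε, f, g, -, K', -, hg, hgf, -, -, -, hA⟩ := hLip x hx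
  have hhalf : Convex ℝ (ball (0 : EuclideanSpace ℝ (Fin (n + 1))) 1 ∩
      {y | 0 < y (Fin.last n)}) :=
    (convex_ball _ _).inter (convex_halfSpace_gt ⟨fun _ _ => rfl, fun _ _ => rfl⟩ 0)
  have hchart : A ∩ ball x ε = g '' (ball 0 1 ∩ {y | 0 < y (Fin.last n)}) := by
    rw [← hA, ← image_comp]
    exact ((image_congr fun y hy => hgf y hy.2).trans (image_id _)).symm
  refine ⟨ε, hε, hchart ▸ ?_⟩
  exact hhalf.isPreconnected.image g (hg.continuousOn.mono inter_subset_left)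

/-- a bounded open set with Lipschitz boundary has finitely many connected
components. -/
theorem stmt5 {n : ℕ} (A : Set (EuclideanSpace ℝ (Fin (n + 1))))
    (hopen : IsOpen A) (hbdd : Bornology.IsBounded A)
    (hLip : HasLipschitzBoundary A) :
    {C : Set (EuclideanSpace ℝ (Fin (n + 1))) | ∃ x ∈ A, C = connectedComponentIn A x}.Finite := by
  have hA_ne : A ≠ univ := fun h => NormedSpace.unbounded_univ ℝ _ (h ▸ hbdd)
  have hK : IsCompact (frontier A) :=
    hbdd.isCompact_closure.of_isClosed_subset isClosed_frontier frontier_subset_closure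
  have hloc : ∀ x ∈ frontier A, ∃ U, IsOpen U ∧ x ∈ U ∧ IsPreconnected (A ∩ U) := by
    intro x hx
    obtain ⟨ε, hε, hconn⟩ := hLip.exists_isPreconnected_inter_ball hx
    exact ⟨ball x ε, isOpen_ball, mem_ball_self hε, hconn⟩
  convert hopen.finite_image_connectedComponentIn hA_ne hK hloc using 1
  ext C
  simp only [mem_ofPred_eq, mem_image, eq_comm]
end

section
/- Let A ⊂ ℝⁿ be an open, bounded set with Lipschitz boundary. Then the closures of distinct connected components of A are pairwise disjoint. -/
/-!
Two components whose closures meet at `z` are merged by any neighbourhood `U` of `z` for which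
`A ∩ U` is preconnected, since `A ∩ U` meets both. At an interior point `z` such a `U` is the
component of `z` in `interior A`; at a boundary point it is a small ball, because the chart
carries `A ∩ U` onto the convex set `{‖y‖ < 1, yₙ > 0}`.
-/

open Metric

open Set Topology

theorem connectedComponentIn_eq_of_mem_closure_of_isPreconnected_inter {X : Type*}
    [TopologicalSpace X] {A U : Set X} {x y z : X}
    (hzx : z ∈ closure (connectedComponentIn A x)) (hzy : z ∈ closure (connectedComponentIn A y))
    (hU : U ∈ 𝓝 z) (hAU : IsPreconnected (A ∩ U)) :
    connectedComponentIn A x = connectedComponentIn A y := by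
  obtain ⟨w, hwU, hwx⟩ := mem_closure_iff_nhds.mp hzx U hU
  obtain ⟨w', hw'U, hw'y⟩ := mem_closure_iff_nhds.mp hzy U hU
  have hAU_sub : A ∩ U ⊆ connectedComponentIn A w :=
    hAU.subset_connectedComponentIn ⟨connectedComponentIn_subset A x hwx, hwU⟩ inter_subset_left
  have hw'w : w' ∈ connectedComponentIn A w :=
    hAU_sub ⟨connectedComponentIn_subset A y hw'y, hw'U⟩
  calc connectedComponentIn A x = connectedComponentIn A w := connectedComponentIn_eq hwx
    _ = connectedComponentIn A w' := connectedComponentIn_eq hw'w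
    _ = connectedComponentIn A y := (connectedComponentIn_eq hw'y).symm

theorem exists_mem_nhds_isPreconnected_inter_of_mem_interior {X : Type*} [TopologicalSpace X]
    [LocallyConnectedSpace X] {A : Set X} {z : X} (hz : z ∈ interior A) :
    ∃ U ∈ 𝓝 z, IsPreconnected (A ∩ U) := by
  refine ⟨connectedComponentIn (interior A) z,
    isOpen_interior.connectedComponentIn.mem_nhds (mem_connectedComponentIn hz), ?_⟩
  rw [inter_eq_right.mpr ((connectedComponentIn_subset _ _).trans interior_subset)]
  exact isPreconnected_connectedComponentIn

namespace HasLipschitzBoundary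

variable {n : ℕ} {A : Set (EuclideanSpace ℝ (Fin (n + 1)))}

theorem exists_isPreconnected_inter_ball_s6 (hA : HasLipschitzBoundary A)
    {z : EuclideanSpace ℝ (Fin (n + 1))} (hz : z ∈ frontier A) :
    ∃ ε > 0, IsPreconnected (A ∩ ball z ε) := by
  obtain ⟨ε, hε, f, g, _, _, -, hg, hgf, -, -, -, hfA⟩ := hA z hz
  have hconvex : Convex ℝ (ball (0 : EuclideanSpace ℝ (Fin (n + 1))) 1 ∩
      {y | 0 < y (Fin.last n)}) :=
    (convex_ball _ _).inter (convex_halfSpace_gt ⟨fun _ _ => rfl, fun _ _ => rfl⟩ 0)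
  have hleft : LeftInvOn g f (A ∩ ball z ε) := fun w hw => hgf w hw.2
  refine ⟨ε, hε, ?_⟩
  rw [← hleft.image_image, hfA]
  exact hconvex.isPreconnected.image g (hg.continuousOn.mono inter_subset_left)

theorem exists_mem_nhds_isPreconnected_inter (hA : HasLipschitzBoundary A)
    {z : EuclideanSpace ℝ (Fin (n + 1))} (hz : z ∈ closure A) :
    ∃ U ∈ 𝓝 z, IsPreconnected (A ∩ U) := by
  rw [closure_eq_interior_union_frontier] at hz
  rcases hz with hz | hz
  · exact exists_mem_nhds_isPreconnected_inter_of_mem_interior hz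
  · obtain ⟨ε, hε, hpre⟩ := hA.exists_isPreconnected_inter_ball_s6 hz
    exact ⟨ball z ε, ball_mem_nhds z hε, hpre⟩

end HasLipschitzBoundary

theorem stmt6_general {n : ℕ} (A : Set (EuclideanSpace ℝ (Fin (n + 1))))
    (hLip : HasLipschitzBoundary A) :
    ∀ x ∈ A, ∀ y ∈ A, connectedComponentIn A x ≠ connectedComponentIn A y →
      closure (connectedComponentIn A x) ∩ closure (connectedComponentIn A y) = ∅ := by
  intro x _ y _ hne
  rw [← not_nonempty_iff_eq_empty]
  rintro ⟨z, hzx, hzy⟩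
  obtain ⟨U, hU, hAU⟩ :=
    hLip.exists_mem_nhds_isPreconnected_inter (closure_mono (connectedComponentIn_subset A x) hzx)
  exact hne (connectedComponentIn_eq_of_mem_closure_of_isPreconnected_inter hzx hzy hU hAU)

/-- for a bounded open set with Lipschitz boundary, closures of distinct
connected components are pairwise disjoint. -/
theorem stmt6 {n : ℕ} (A : Set (EuclideanSpace ℝ (Fin (n + 1))))
    (hopen : IsOpen A) (hbdd : Bornology.IsBounded A)
    (hLip : HasLipschitzBoundary A) :
    ∀ x ∈ A, ∀ y ∈ A, connectedComponentIn A x ≠ connectedComponentIn A y →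
      closure (connectedComponentIn A x) ∩ closure (connectedComponentIn A y) = ∅ :=
  stmt6_general A hLip
end

section
/- Let α : 𝒜 → [0,∞] be a non-negative increasing set function on the class 𝒜 of open subsets of a bounded open set ω ⊂ ℝⁿ with α(∅) = 0. Then α extends to a Borel measure on ω (i.e. there exists a Borel measure μ with μ(A) = α(A) for all open A ⊂ ω) if and only if α is subadditive (α(A) ≤ α(A₁)+α(A₂) whenever A ⊂ A₁ ∪ A₂), superadditive (α(A) ≥ α(A₁)+α(A₂) whenever A₁, A₂ ⊂ A are disjoint), and inner regular (α(A) = sup{α(B) : B open, closure(B) compact ⊂ A}). -/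
/-!
An open set is the increasing union of a sequence of open sets with compact closure inside it,
so continuity from below shows that the restriction of any measure to open sets has the three
properties.

Conversely, let `ν` be the Carathéodory outer measure built from covers by open subsets of `ω`.
Inner regularity and compactness reduce countable covers to finite ones, so subadditivity gives
`ν = α` on open subsets of `ω`. For open `G` and `U ⊆ ω`, superadditivity applied to `B` and
`U \ closure B`, with `closure B ⊆ U ∩ G`, gives `α (U ∩ G) + ν (U \ G) ≤ α U` after taking the
supremum over `B`; this makes every open set Carathéodory measurable.
-/

open MeasureTheory Set TopologicalSpace
open scoped ENNReal

section SetFunction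

variable {X : Type*} [TopologicalSpace X]

def SubadditiveOnOpens (ω : Set X) (α : Set X → ℝ≥0∞) : Prop :=
  ∀ A A₁ A₂ : Set X, IsOpen A → IsOpen A₁ → IsOpen A₂ →
    A ⊆ ω → A₁ ⊆ ω → A₂ ⊆ ω → A ⊆ A₁ ∪ A₂ → α A ≤ α A₁ + α A₂

def SuperadditiveOnOpens (ω : Set X) (α : Set X → ℝ≥0∞) : Prop :=
  ∀ A A₁ A₂ : Set X, IsOpen A → IsOpen A₁ → IsOpen A₂ →
    A ⊆ ω → A₁ ⊆ A → A₂ ⊆ A → Disjoint A₁ A₂ → α A₁ + α A₂ ≤ α A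

def InnerRegularOnOpens (ω : Set X) (α : Set X → ℝ≥0∞) : Prop :=
  ∀ A ⊆ ω, IsOpen A →
    α A = ⨆ (B : Set X) (_ : IsOpen B) (_ : IsCompact (closure B)) (_ : closure B ⊆ A), α B

end SetFunction

theorem IsOpen.exists_monotone_iUnion_eq_isCompact_closure {X : Type*} [TopologicalSpace X]
    [LocallyCompactSpace X] [RegularSpace X] [SecondCountableTopology X]
    {A : Set X} (hA : IsOpen A) :
    ∃ B : ℕ → Set X, Monotone B ∧
      (∀ k, IsOpen (B k) ∧ IsCompact (closure (B k)) ∧ closure (B k) ⊆ A) ∧ ⋃ k, B k = A := by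
  rcases A.eq_empty_or_nonempty with rfl | hne
  · exact ⟨fun _ => ∅, monotone_const, fun _ => by simp, iUnion_empty⟩
  choose V hVo hxV hVA hVc using fun x : A =>
    exists_open_between_and_isCompact_closure isCompact_singleton hA (singleton_subset_iff.2 x.2)
  have hVU : ⋃ x, V x = A :=
    (iUnion_subset fun x => subset_closure.trans (hVA x)).antisymm
      fun x hx => mem_iUnion.2 ⟨⟨x, hx⟩, hxV _ rfl⟩
  obtain ⟨T, hTc, hTU⟩ := isOpen_iUnion_countable V hVo
  obtain ⟨f, rfl⟩ := hTc.exists_eq_range <| by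
    by_contra! hT
    simp only [hT, biUnion_empty, hVU] at hTU
    exact hne.ne_empty hTU.symm
  refine ⟨accumulate (V ∘ f), monotone_accumulate, fun k => ⟨?_, ?_, ?_⟩, ?_⟩
  · exact isOpen_biUnion fun i _ => hVo (f i)
  · rw [accumulate_def, closure_iUnion₂_le_nat]
    exact isCompact_accumulate (fun i => hVc (f i)) k
  · rw [accumulate_def, closure_iUnion₂_le_nat]
    exact iUnion₂_subset fun i _ => hVA (f i)
  · rw [iUnion_accumulate]
    exact (biUnion_range (f := f) (g := V)).symm.trans (hTU.trans hVU)

theorem IsOpen.measure_eq_iSup_isCompact_closure {X : Type*} [TopologicalSpace X]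
    [MeasurableSpace X] [LocallyCompactSpace X] [RegularSpace X] [SecondCountableTopology X]
    {A : Set X} (hA : IsOpen A) (μ : Measure X) :
    μ A = ⨆ (B : Set X) (_ : IsOpen B) (_ : IsCompact (closure B)) (_ : closure B ⊆ A), μ B := by
  refine le_antisymm ?_ (iSup_le fun B => iSup₂_le fun _ _ => iSup_le fun hBA =>
    measure_mono (subset_closure.trans hBA))
  obtain ⟨B, hBmono, hB, hBA⟩ := hA.exists_monotone_iUnion_eq_isCompact_closure
  calc μ A = ⨆ k, μ (B k) := by rw [← hBmono.measure_iUnion, hBA]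
    _ ≤ _ := iSup_mono' fun k => ⟨B k, le_iSup₂_of_le (hB k).1 (hB k).2.1 <|
      le_iSup (fun _ => μ (B k)) (hB k).2.2⟩

section OfMeasure

variable {X : Type*} [TopologicalSpace X] [MeasurableSpace X] {μ : Measure X} {ω : Set X}
  {α : Set X → ℝ≥0∞}

theorem subadditiveOnOpens_of_measure_eq (h : ∀ A ⊆ ω, IsOpen A → μ A = α A) :
    SubadditiveOnOpens ω α := by
  intro A A₁ A₂ hA hA₁ hA₂ hAω hA₁ω hA₂ω hAA
  rw [← h A hAω hA, ← h A₁ hA₁ω hA₁, ← h A₂ hA₂ω hA₂]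
  exact (measure_mono hAA).trans (measure_union_le A₁ A₂)

theorem superadditiveOnOpens_of_measure_eq [OpensMeasurableSpace X]
    (h : ∀ A ⊆ ω, IsOpen A → μ A = α A) : SuperadditiveOnOpens ω α := by
  intro A A₁ A₂ hA hA₁ hA₂ hAω hA₁A hA₂A hdisj
  rw [← h A hAω hA, ← h A₁ (hA₁A.trans hAω) hA₁, ← h A₂ (hA₂A.trans hAω) hA₂,
    ← measure_union hdisj hA₂.measurableSet]
  exact measure_mono (union_subset hA₁A hA₂A)

theorem innerRegularOnOpens_of_measure_eq [LocallyCompactSpace X] [RegularSpace X]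
    [SecondCountableTopology X] (h : ∀ A ⊆ ω, IsOpen A → μ A = α A) :
    InnerRegularOnOpens ω α := by
  intro A hAω hA
  rw [← h A hAω hA, hA.measure_eq_iSup_isCompact_closure μ]
  refine iSup_congr fun B => iSup_congr fun hB => iSup_congr fun _ => iSup_congr fun hBA => ?_
  exact h B ((subset_closure.trans hBA).trans hAω) hB

end OfMeasure

section OuterMeasureOfOpens

variable {X : Type*} [TopologicalSpace X]

open Classical in
noncomputable def outerMeasureOfOpens (ω : Set X) (α : Set X → ℝ≥0∞) (hα : α ∅ = 0) :
    OuterMeasure X :=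
  OuterMeasure.ofFunction (fun A => if IsOpen A ∧ A ⊆ ω then α A else ∞) (by simp [hα])

variable {ω : Set X} {α : Set X → ℝ≥0∞}

theorem SubadditiveOnOpens.le_sum_of_subset_biUnion {ι : Type*} (hα : α ∅ = 0)
    (hsub : SubadditiveOnOpens ω α) (s : Finset ι) {f : ι → Set X} (hf : ∀ i, IsOpen (f i))
    (hfω : ∀ i, f i ⊆ ω) {A : Set X} (hA : IsOpen A) (hAω : A ⊆ ω) (hAf : A ⊆ ⋃ i ∈ s, f i) :
    α A ≤ ∑ i ∈ s, α (f i) := by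
  classical
  induction s using Finset.induction_on generalizing A with
  | empty => simp_all
  | insert j s hj ih =>
    rw [Finset.set_biUnion_insert] at hAf
    rw [Finset.sum_insert hj]
    have hU : IsOpen (⋃ i ∈ s, f i) := isOpen_biUnion fun i _ => hf i
    have hUω : ⋃ i ∈ s, f i ⊆ ω := iUnion₂_subset fun i _ => hfω i
    exact (hsub A (f j) _ hA (hf j) hU hAω (hfω j) hUω hAf).trans
      (add_le_add_right (ih hU hUω Subset.rfl) _)

theorem InnerRegularOnOpens.le_tsum_of_subset_iUnion {ι : Type*} (hα : α ∅ = 0)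
    (hsub : SubadditiveOnOpens ω α) (hreg : InnerRegularOnOpens ω α) {f : ι → Set X}
    (hf : ∀ i, IsOpen (f i)) (hfω : ∀ i, f i ⊆ ω) {A : Set X} (hA : IsOpen A) (hAω : A ⊆ ω)
    (hAf : A ⊆ ⋃ i, f i) :
    α A ≤ ∑' i, α (f i) := by
  rw [hreg A hAω hA]
  refine iSup_le fun B => iSup₂_le fun hB hBc => iSup_le fun hBA => ?_
  obtain ⟨s, hs⟩ := hBc.elim_finite_subcover f hf (hBA.trans hAf)
  exact (hsub.le_sum_of_subset_biUnion hα s hf hfω hB ((subset_closure.trans hBA).trans hAω)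
    (subset_closure.trans hs)).trans (ENNReal.sum_le_tsum s)

variable {hα : α ∅ = 0}

theorem outerMeasureOfOpens_le {A : Set X} (hA : IsOpen A) (hAω : A ⊆ ω) :
    outerMeasureOfOpens ω α hα A ≤ α A :=
  (OuterMeasure.ofFunction_le A).trans_eq (if_pos ⟨hA, hAω⟩)

theorem le_outerMeasureOfOpens {E : Set X} {m : ℝ≥0∞}
    (h : ∀ f : ℕ → Set X, (∀ i, IsOpen (f i)) → (∀ i, f i ⊆ ω) → E ⊆ ⋃ i, f i →
      m ≤ ∑' i, α (f i)) :
    m ≤ outerMeasureOfOpens ω α hα E := by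
  refine le_iInf₂ fun f hEf => ?_
  by_cases hf : ∀ i, IsOpen (f i) ∧ f i ⊆ ω
  · simp only [hf]
    exact h f (fun i => (hf i).1) (fun i => (hf i).2) hEf
  · obtain ⟨i, hi⟩ := not_forall.1 hf
    exact le_top.trans_eq (ENNReal.tsum_eq_top_of_eq_top ⟨i, if_neg hi⟩).symm

theorem outerMeasureOfOpens_apply (hsub : SubadditiveOnOpens ω α) (hreg : InnerRegularOnOpens ω α)
    {A : Set X} (hA : IsOpen A) (hAω : A ⊆ ω) : outerMeasureOfOpens ω α hα A = α A :=
  (outerMeasureOfOpens_le hA hAω).antisymm <|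
    le_outerMeasureOfOpens fun _ hf hfω hAf =>
      hreg.le_tsum_of_subset_iUnion hα hsub hf hfω hA hAω hAf

theorem add_outerMeasureOfOpens_diff_le (hsup : SuperadditiveOnOpens ω α)
    (hreg : InnerRegularOnOpens ω α) {U G : Set X} (hU : IsOpen U) (hUω : U ⊆ ω) (hG : IsOpen G) :
    α (U ∩ G) + outerMeasureOfOpens ω α hα (U \ G) ≤ α U := by
  rw [hreg (U ∩ G) (inter_subset_left.trans hUω) (hU.inter hG)]
  simp only [iSup_and']
  rw [ENNReal.biSup_add' ⟨∅, isOpen_empty, by simp, by simp⟩]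
  refine iSup₂_le fun B ⟨hB, _, hBUG⟩ => ?_
  have hBU : B ⊆ U := subset_closure.trans (hBUG.trans inter_subset_left)
  calc α B + outerMeasureOfOpens ω α hα (U \ G)
      ≤ α B + α (U \ closure B) := by
        gcongr
        exact (measure_mono (sdiff_subset_sdiff_right (hBUG.trans inter_subset_right))).trans
          (outerMeasureOfOpens_le (hU.sdiff isClosed_closure) (sdiff_subset.trans hUω))
    _ ≤ α U := hsup U B _ hU hB (hU.sdiff isClosed_closure) hUω hBU sdiff_subset
        (disjoint_sdiff_right.mono_left subset_closure)

theorem isCaratheodory_outerMeasureOfOpens (hsup : SuperadditiveOnOpens ω α)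
    (hreg : InnerRegularOnOpens ω α) {G : Set X} (hG : IsOpen G) :
    (outerMeasureOfOpens ω α hα).IsCaratheodory G := by
  set ν := outerMeasureOfOpens ω α hα
  refine (OuterMeasure.isCaratheodory_iff_le ν).2 fun E =>
    le_outerMeasureOfOpens fun f hf hfω hEf => ?_
  have hinter : ν (E ∩ G) ≤ ∑' i, α (f i ∩ G) := by
    refine (measure_mono ((inter_subset_inter_left G hEf).trans (iUnion_inter G f).subset)).trans
      ((measure_iUnion_le _).trans (ENNReal.tsum_le_tsum fun i => ?_))
    exact outerMeasureOfOpens_le ((hf i).inter hG) (inter_subset_left.trans (hfω i))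
  have hdiff : ν (E \ G) ≤ ∑' i, ν (f i \ G) :=
    (measure_mono ((sdiff_subset_sdiff_left hEf).trans (iUnion_sdiff G f).subset)).trans
      (measure_iUnion_le _)
  calc ν (E ∩ G) + ν (E \ G) ≤ ∑' i, (α (f i ∩ G) + ν (f i \ G)) := by
        rw [ENNReal.tsum_add]
        exact add_le_add hinter hdiff
    _ ≤ ∑' i, α (f i) := ENNReal.tsum_le_tsum fun i =>
        add_outerMeasureOfOpens_diff_le hsup hreg (hf i) (hfω i) hG

theorem exists_measure_eq_on_opens [MeasurableSpace X] [BorelSpace X] (hα : α ∅ = 0)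
    (hsub : SubadditiveOnOpens ω α) (hsup : SuperadditiveOnOpens ω α)
    (hreg : InnerRegularOnOpens ω α) : ∃ μ : Measure X, ∀ A ⊆ ω, IsOpen A → μ A = α A := by
  have hle : ‹MeasurableSpace X› ≤ (outerMeasureOfOpens ω α hα).caratheodory := by
    rw [BorelSpace.measurable_eq (α := X)]
    exact MeasurableSpace.generateFrom_le fun G hG =>
      isCaratheodory_outerMeasureOfOpens hsup hreg hG
  refine ⟨(outerMeasureOfOpens ω α hα).toMeasure hle, fun A hAω hA => ?_⟩
  rw [toMeasure_apply _ hle hA.measurableSet]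
  exact outerMeasureOfOpens_apply hsub hreg hA hAω

end OuterMeasureOfOpens

theorem stmt12_general {n : ℕ} (ω : Set (Fin n → ℝ))
    (α : Set (Fin n → ℝ) → ℝ≥0∞)
    (hempty : α ∅ = 0) :
    (∃ μ : Measure (Fin n → ℝ), ∀ A ⊆ ω, IsOpen A → μ A = α A) ↔
      ((∀ A A₁ A₂ : Set (Fin n → ℝ), IsOpen A → IsOpen A₁ → IsOpen A₂ →
          A ⊆ ω → A₁ ⊆ ω → A₂ ⊆ ω → A ⊆ A₁ ∪ A₂ → α A ≤ α A₁ + α A₂) ∧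
        (∀ A A₁ A₂ : Set (Fin n → ℝ), IsOpen A → IsOpen A₁ → IsOpen A₂ →
          A ⊆ ω → A₁ ⊆ A → A₂ ⊆ A → Disjoint A₁ A₂ → α A₁ + α A₂ ≤ α A) ∧
        (∀ A ⊆ ω, IsOpen A →
          α A = ⨆ (B : Set (Fin n → ℝ)) (_ : IsOpen B) (_ : IsCompact (closure B))
            (_ : closure B ⊆ A), α B)) :=
  ⟨fun ⟨_, hμ⟩ => ⟨subadditiveOnOpens_of_measure_eq hμ, superadditiveOnOpens_of_measure_eq hμ,
      innerRegularOnOpens_of_measure_eq hμ⟩,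
    fun ⟨hsub, hsup, hreg⟩ => exists_measure_eq_on_opens hempty hsub hsup hreg⟩

/-- De Giorgi–Letta criterion. An increasing set function on the open
subsets of a bounded open set `ω ⊂ ℝⁿ` with `α(∅) = 0` extends to a Borel measure iff it
is subadditive, superadditive and inner regular. -/
theorem stmt12 {n : ℕ} (ω : Set (Fin n → ℝ)) (hωopen : IsOpen ω)
    (hωbdd : Bornology.IsBounded ω)
    (α : Set (Fin n → ℝ) → ℝ≥0∞)
    (hmono : ∀ A B : Set (Fin n → ℝ), IsOpen A → IsOpen B → A ⊆ B → B ⊆ ω → α A ≤ α B)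
    (hempty : α ∅ = 0) :
    (∃ μ : Measure (Fin n → ℝ), ∀ A ⊆ ω, IsOpen A → μ A = α A) ↔
      ((∀ A A₁ A₂ : Set (Fin n → ℝ), IsOpen A → IsOpen A₁ → IsOpen A₂ →
          A ⊆ ω → A₁ ⊆ ω → A₂ ⊆ ω → A ⊆ A₁ ∪ A₂ → α A ≤ α A₁ + α A₂) ∧
        (∀ A A₁ A₂ : Set (Fin n → ℝ), IsOpen A → IsOpen A₁ → IsOpen A₂ →
          A ⊆ ω → A₁ ⊆ A → A₂ ⊆ A → Disjoint A₁ A₂ → α A₁ + α A₂ ≤ α A) ∧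
        (∀ A ⊆ ω, IsOpen A →
          α A = ⨆ (B : Set (Fin n → ℝ)) (_ : IsOpen B) (_ : IsCompact (closure B))
            (_ : closure B ⊆ A), α B)) :=
  stmt12_general ω α hempty
end
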